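/- arXiv:1710.00089 — 2 statements merged into one kernel-verified Lean document; each statement's English description precedes it below -/
import Mathlib

section
/- Under the standing setup, for every index j ∈ {1, …, n+1} with j ≠ k_3, the standard basis vector satisfies ⟨v_j, x_0⟩ ≥ 0. -/
/-!
Every element of `(σ)^⊥` pairs evenly with `x₀`, since the column of `x₀` in the Gram matrix
of the C-type lattice is even. In the tight case `⟨v_j, x₀⟩ ≥ 0` is a direct computation. Otherwise
`v_j = ∑_{i ∈ A} e_i - e_j` and `⟨v_j, x₀⟩ ≥ -1`, hence `≥ 0` by parity, except when
`x₀ = e₀ - e_{k₁} - e_{k₂} + e_{k₃}` with `k₁, k₂ ∈ A` and `0, k₃ ∉ A`. There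
`σ₀ + σ_{k₃} = σ_{k₁} + σ_{k₂}`: if `k₃ < j`, trading `{k₁, k₂}` for `{0, k₃}` in `A` increases
`∑_{i ∈ A} 2^i`, contradicting the choice of `A`; if `j < k₃`, then `σ_j ≤ σ_{k₃}` forces `σ₀ = 0`,
so `e₀ ∈ (σ)^⊥` pairs oddly with `x₀`.
-/

namespace Prism

/-- Gram matrix of a C-type lattice with parameters `a 1, …, a n` (vertices `x_0, …, x_n`). -/
def CGram (n : ℕ) (a : ℕ → ℤ) : Fin (n + 1) → Fin (n + 1) → ℤ := fun i j =>
  if (i : ℕ) = (j : ℕ) then (if (i : ℕ) = 0 then 4 else a (i : ℕ))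
  else if ((i : ℕ) = 0 ∧ (j : ℕ) = 1) ∨ ((i : ℕ) = 1 ∧ (j : ℕ) = 0) then -2
  else if (i : ℕ) + 1 = (j : ℕ) ∨ (j : ℕ) + 1 = (i : ℕ) then -1
  else 0

/-- The symmetric bilinear form of a C-type lattice. -/
def CForm (n : ℕ) (a : ℕ → ℤ) (v w : Fin (n + 1) → ℤ) : ℤ :=
  ∑ i : Fin (n + 1), ∑ j : Fin (n + 1), v i * CGram n a i j * w j

/-- Conditions on the parameters of a C-type lattice: `n ≥ 1`, all `a_i ≥ 2`, `a_1 ≥ 3`. -/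
def CTypeParams (n : ℕ) (a : ℕ → ℤ) : Prop :=
  1 ≤ n ∧ (∀ i, 1 ≤ i → i ≤ n → 2 ≤ a i) ∧ 3 ≤ a 1

/-- Numerator/denominator pair of the Hirzebruch–Jung continued fraction `[a_1, …, a_k]⁻`. -/
def hjPair : List ℤ → ℤ × ℤ
  | [] => (1, 0)
  | x :: l => (x * (hjPair l).1 - (hjPair l).2, (hjPair l).1)

/-- `a 1, …, a n` are the coefficients of the HJ expansion of `(2q-p)/(q-p)`, all `≥ 2`
(`a_1 ≥ 3` being forced since `q > p`); i.e. the data defining the lattice `C(p,q)`. -/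
def IsCpq (p q : ℤ) (n : ℕ) (a : ℕ → ℤ) : Prop :=
  CTypeParams n a ∧ hjPair ((List.range' 1 n).map fun i => a i) = (2 * q - p, q - p)

/-- Standard dot product on `ℤ^m`. -/
def dotF {m : ℕ} (v w : Fin m → ℤ) : ℤ := ∑ i, v i * w i

/-- Orthogonal complement of `σ` in `ℤ^m`. -/
def perp {m : ℕ} (σ : Fin m → ℤ) : Submodule ℤ (Fin m → ℤ) where
  carrier := {v | dotF v σ = 0}
  add_mem' := by
    intro a b ha hb
    simp only [Set.mem_setOf_eq, dotF, Pi.add_apply, add_mul, Finset.sum_add_distrib] at *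
    omega
  zero_mem' := by simp [dotF]
  smul_mem' := by
    intro c v hv
    simp only [Set.mem_setOf_eq, dotF, Pi.smul_apply, smul_eq_mul, mul_assoc] at *
    rw [← Finset.mul_sum, hv, mul_zero]

/-- Changemaker vector in `ℤ^m`. -/
def IsChangemaker (m : ℕ) (σ : Fin m → ℤ) : Prop :=
  Monotone σ ∧ (∀ i, 0 ≤ σ i) ∧
    ∀ k : ℤ, 0 ≤ k → k ≤ ∑ i, σ i → ∃ S : Finset (Fin m), k = ∑ i ∈ S, σ i

/-- The interval `x_a + x_{a+1} + ⋯ + x_b` in a C-type lattice of rank `n+1`. -/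
def intVec (n : ℕ) (a b : ℕ) : Fin (n + 1) → ℤ := fun i =>
  if a ≤ (i : ℕ) ∧ (i : ℕ) ≤ b then 1 else 0

/-- Breakability with respect to the C-type form. -/
def CBreakable (n : ℕ) (a : ℕ → ℤ) (ℓ : Fin (n + 1) → ℤ) : Prop :=
  ∃ x y : Fin (n + 1) → ℤ, ℓ = x + y ∧ 3 ≤ CForm n a x x ∧ 3 ≤ CForm n a y y ∧
    CForm n a x y = -1

/-- Breakability inside the lattice `(σ)^⊥ ⊆ ℤ^m`. -/
def PerpBreakable {m : ℕ} (σ : Fin m → ℤ) (ℓ : Fin m → ℤ) : Prop :=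
  ∃ x y : Fin m → ℤ, x ∈ perp σ ∧ y ∈ perp σ ∧ ℓ = x + y ∧
    3 ≤ dotF x x ∧ 3 ≤ dotF y y ∧ dotF x y = -1

/-- The number `δ([I],[J])` of dangling edges for intervals `[a,b]` and `[c,d]`,
counted with multiplicity (the edge `x_0x_1` is doubled). -/
def deltaCount (n a b c d : ℕ) : ℤ :=
  ∑ k ∈ Finset.range n,
    if (((a ≤ k ∧ k ≤ b) ∧ (c ≤ k + 1 ∧ k + 1 ≤ d)) ∨
          ((c ≤ k ∧ k ≤ d) ∧ (a ≤ k + 1 ∧ k + 1 ≤ b))) ∧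
        (¬((a ≤ k ∧ k ≤ b) ∧ (c ≤ k ∧ k ≤ d)) ∨
          ¬((a ≤ k + 1 ∧ k + 1 ≤ b) ∧ (c ≤ k + 1 ∧ k + 1 ≤ d)))
    then (if k = 0 then 2 else 1) else 0

/-- `v_j` is tight: `σ_j = 1 + σ_0 + ⋯ + σ_{j-1}`. -/
def IsTight {m : ℕ} (σ : Fin m → ℤ) (j : Fin m) : Prop :=
  σ j = 1 + ∑ i ∈ Finset.Iio j, σ i

/-- The vector `2e_0 + e_1 + ⋯ + e_{j-1} - e_j`. -/
def tightVec (m : ℕ) (j : Fin m) : Fin m → ℤ := fun i =>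
  if i = j then -1 else if i < j then (if (i : ℕ) = 0 then 2 else 1) else 0

/-- `A ⊆ {0,…,j-1}` with `σ_j = ∑_{i ∈ A} σ_i`, maximizing `∑_{i ∈ A} 2^i`. -/
def MaxSubsetRep {m : ℕ} (σ : Fin m → ℤ) (j : Fin m) (A : Finset (Fin m)) : Prop :=
  A ⊆ Finset.Iio j ∧ σ j = ∑ i ∈ A, σ i ∧
    ∀ B ⊆ Finset.Iio j, σ j = ∑ i ∈ B, σ i →
      ∑ i ∈ B, 2 ^ (i : ℕ) ≤ ∑ i ∈ A, 2 ^ (i : ℕ)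

/-- The vector `∑_{i ∈ A} e_i - e_j`. -/
def subsetVec (m : ℕ) (A : Finset (Fin m)) (j : Fin m) : Fin m → ℤ := fun i =>
  if i = j then -1 else if i ∈ A then 1 else 0

/-- `v` is the standard basis vector `v_j` of the changemaker lattice `(σ)^⊥`. -/
def IsStdBasisVec {m : ℕ} (σ : Fin m → ℤ) (j : Fin m) (v : Fin m → ℤ) : Prop :=
  (IsTight σ j ∧ v = tightVec m j) ∨
    (¬IsTight σ j ∧ ∃ A : Finset (Fin m), MaxSubsetRep σ j A ∧ v = subsetVec m A j)

/-- The subset `A` has a gappy index for `v_j`: some `i ∈ A` with `i < j - 1`, `i + 1 ∉ A`. -/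
def IsGappyAt {m : ℕ} (A : Finset (Fin m)) (j : Fin m) : Prop :=
  ∃ i ∈ A, (i : ℕ) + 1 < (j : ℕ) ∧ ∀ i' ∈ A, (i' : ℕ) ≠ (i : ℕ) + 1

/-- The reflection about `x_0^⊥` (using that `⟨x_0, v⟩` is always even and `⟨x_0,x_0⟩ = 4`). -/
def cRefl (n : ℕ) (a : ℕ → ℤ) (v : Fin (n + 1) → ℤ) : Fin (n + 1) → ℤ :=
  v - (CForm n a (Pi.single 0 1) v / 2) • Pi.single 0 1

open Finset

section DotProduct

variable {m : ℕ}

lemma dotF_eq_dotProduct (v w : Fin m → ℤ) : dotF v w = v ⬝ᵥ w := rfl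

lemma dotF_comm (v w : Fin m → ℤ) : dotF v w = dotF w v := by
  simp only [dotF_eq_dotProduct, dotProduct_comm]

lemma dotF_single_right (v : Fin m → ℤ) (k : Fin m) : dotF v (Pi.single k 1) = v k := by
  simp [dotF_eq_dotProduct, dotProduct_single]

lemma single_mem_perp {σ : Fin m → ℤ} {k : Fin m} (hk : σ k = 0) : Pi.single k 1 ∈ perp σ := by
  change dotF _ σ = 0
  rw [dotF_comm, dotF_single_right, hk]

end DotProduct

lemma two_dvd_CForm_single_zero (n : ℕ) (a : ℕ → ℤ) (v : Fin (n + 1) → ℤ) :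
    2 ∣ CForm n a v (Pi.single 0 1) := by
  refine dvd_sum fun i _ => dvd_sum fun k _ => ?_
  rcases eq_or_ne k 0 with rfl | hk
  · refine Dvd.dvd.mul_right (Dvd.dvd.mul_left ?_ _) _
    unfold CGram
    split_ifs <;> simp_all
  · simp [Pi.single_eq_of_ne hk]

lemma two_dvd_dotF_of_mem_perp {n m : ℕ} {a : ℕ → ℤ} {σ : Fin m → ℤ}
    (φ : (Fin (n + 1) → ℤ) ≃ₗ[ℤ] perp σ)
    (hφ : ∀ v w, CForm n a v w = dotF (φ v : Fin m → ℤ) (φ w : Fin m → ℤ))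
    {v : Fin m → ℤ} (hv : v ∈ perp σ) :
    2 ∣ dotF v (φ (Pi.single 0 1) : Fin m → ℤ) := by
  obtain ⟨w, hw⟩ := φ.surjective ⟨v, hv⟩
  rw [show v = φ w by rw [hw], ← hφ]
  exact two_dvd_CForm_single_zero n a w

section SubsetVec

variable {m : ℕ} {A : Finset (Fin m)} {j : Fin m}

lemma subsetVec_mem_perp {σ : Fin m → ℤ} (hjA : j ∉ A) (hsum : σ j = ∑ i ∈ A, σ i) :
    subsetVec m A j ∈ perp σ := by
  change ∑ i, subsetVec m A j i * σ i = 0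
  have hsplit : ∀ i, subsetVec m A j i * σ i =
      (if i ∈ A then σ i else 0) - (if i = j then σ i else 0) := by
    intro i
    by_cases hij : i = j
    · subst hij; simp [subsetVec, hjA]
    · simp [subsetVec, hij]
  simp only [hsplit, sum_sub_distrib, sum_ite_mem, univ_inter, sum_ite_eq', mem_univ, if_true,
    hsum, sub_self]

lemma MaxSubsetRep.subsetVec_mem_perp {σ : Fin m → ℤ} (hA : MaxSubsetRep σ j A) :
    subsetVec m A j ∈ perp σ :=
  Prism.subsetVec_mem_perp (fun h => by simpa using hA.1 h) hA.2.1

lemma MaxSubsetRep.sum_pow_le_of_exchange {σ : Fin m → ℤ} (hA : MaxSubsetRep σ j A)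
    {B C : Finset (Fin m)} (hBA : B ⊆ A) (hC : C ⊆ Iio j) (hCA : Disjoint C A)
    (hBC : ∑ i ∈ B, σ i = ∑ i ∈ C, σ i) :
    ∑ i ∈ C, 2 ^ (i : ℕ) ≤ ∑ i ∈ B, 2 ^ (i : ℕ) := by
  obtain ⟨hAj, hσA, hmax⟩ := hA
  have hdisj : Disjoint (A \ B) C := hCA.symm.mono_left sdiff_subset
  have hsub : A \ B ∪ C ⊆ Iio j := union_subset (sdiff_subset.trans hAj) hC
  have key := hmax _ hsub (by rw [sum_union hdisj, hσA, ← sum_sdiff hBA, hBC])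
  rw [sum_union hdisj, ← sum_sdiff hBA] at key
  omega

end SubsetVec

lemma two_pow_add_two_pow_lt {a b c : ℕ} (hab : a < b) (hbc : b < c) : 2 ^ a + 2 ^ b < 2 ^ c :=
  calc 2 ^ a + 2 ^ b < 2 ^ b + 2 ^ b := by gcongr; norm_num
    _ = 2 ^ (b + 1) := by ring
    _ ≤ 2 ^ c := Nat.pow_le_pow_right (by norm_num) hbc

section Coordinates

variable {m : ℕ} [NeZero m] {j k₁ k₂ k₃ : Fin m}

lemma dotF_single_add_add_sub (v : Fin m → ℤ) :
    dotF v (Pi.single 0 1 + Pi.single k₁ 1 + Pi.single k₂ 1 - Pi.single k₃ 1) =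
      v 0 + v k₁ + v k₂ - v k₃ := by
  simp [dotF_eq_dotProduct, dotProduct_add, dotProduct_sub, dotProduct_single]

lemma dotF_single_sub_sub_add (v : Fin m → ℤ) :
    dotF v (Pi.single 0 1 - Pi.single k₁ 1 - Pi.single k₂ 1 + Pi.single k₃ 1) =
      v 0 - v k₁ - v k₂ + v k₃ := by
  simp [dotF_eq_dotProduct, dotProduct_add, dotProduct_sub, dotProduct_single]

lemma tightVec_pairing_nonneg (hj : 0 < j) (h₁ : 0 < k₁) (h₁₂ : k₁ < k₂) (h₂₃ : k₂ < k₃)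
    (hj₃ : j ≠ k₃) :
    0 ≤ tightVec m j 0 + tightVec m j k₁ + tightVec m j k₂ - tightVec m j k₃ ∧
      0 ≤ tightVec m j 0 - tightVec m j k₁ - tightVec m j k₂ + tightVec m j k₃ := by
  have := Fin.val_zero m
  simp only [tightVec]
  split_ifs <;> omega

variable {A : Finset (Fin m)}

lemma neg_one_le_subsetVec_add_add_sub (hA : A ⊆ Iio j) (hj : 0 < j) (h₁₂ : k₁ < k₂)
    (h₂₃ : k₂ < k₃) :
    -1 ≤ subsetVec m A j 0 + subsetVec m A j k₁ + subsetVec m A j k₂ - subsetVec m A j k₃ := by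
  have hlt : ∀ i ∈ A, i < j := fun i hi => mem_Iio.mp (hA hi)
  have := Fin.val_zero m
  simp only [subsetVec]
  split_ifs <;> first | omega | (have := hlt _ ‹_›; omega)

lemma neg_one_le_subsetVec_sub_sub_add_or (hA : A ⊆ Iio j) (hj : 0 < j) (h₁₂ : k₁ < k₂)
    (h₂₃ : k₂ < k₃) (hj₃ : j ≠ k₃) :
    -1 ≤ subsetVec m A j 0 - subsetVec m A j k₁ - subsetVec m A j k₂ + subsetVec m A j k₃ ∨
      (k₁ ∈ A ∧ k₂ ∈ A ∧ 0 ∉ A ∧ k₃ ∉ A) := by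
  have hlt : ∀ i ∈ A, i < j := fun i hi => mem_Iio.mp (hA hi)
  have := Fin.val_zero m
  simp only [subsetVec]
  split_ifs <;> first | omega | (have := hlt _ ‹_›; omega) | tauto

end Coordinates

section Exchange

variable {m : ℕ} [NeZero m] {σ : Fin m → ℤ} {j k₁ k₂ k₃ : Fin m} {A : Finset (Fin m)}

lemma MaxSubsetRep.false_of_swap (hA : MaxSubsetRep σ j A) (h₁ : 0 < k₁) (h₁₂ : k₁ < k₂)
    (h₂₃ : k₂ < k₃) (h₃ : k₃ < j) (hσ : σ k₁ + σ k₂ = σ 0 + σ k₃)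
    (hk₁ : k₁ ∈ A) (hk₂ : k₂ ∈ A) (h₀ : 0 ∉ A) (hk₃ : k₃ ∉ A) : False := by
  have h₀₃ : (0 : Fin m) ≠ k₃ := by omega
  have hle := hA.sum_pow_le_of_exchange (B := {k₁, k₂}) (C := {0, k₃})
    (insert_subset hk₁ (singleton_subset_iff.mpr hk₂))
    (insert_subset (mem_Iio.mpr (by omega)) (singleton_subset_iff.mpr (mem_Iio.mpr h₃)))
    (disjoint_insert_left.mpr ⟨h₀, disjoint_singleton_left.mpr hk₃⟩)
    (by rw [sum_pair h₁₂.ne, sum_pair h₀₃, hσ])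
  rw [sum_pair h₁₂.ne, sum_pair h₀₃, Fin.val_zero] at hle
  have := two_pow_add_two_pow_lt (Fin.lt_def.mp h₁₂) (Fin.lt_def.mp h₂₃)
  omega

lemma MaxSubsetRep.eq_zero_of_pair_mem (hA : MaxSubsetRep σ j A) (hmono : Monotone σ)
    (hnn : ∀ i, 0 ≤ σ i) (h₁₂ : k₁ ≠ k₂) (h₃ : j ≤ k₃) (hσ : σ k₁ + σ k₂ = σ 0 + σ k₃)
    (hk₁ : k₁ ∈ A) (hk₂ : k₂ ∈ A) : σ 0 = 0 := by
  have hpair : σ k₁ + σ k₂ ≤ σ j := by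
    rw [← sum_pair h₁₂, hA.2.1]
    exact sum_le_sum_of_subset_of_nonneg (insert_subset hk₁ (singleton_subset_iff.mpr hk₂))
      fun i _ _ => hnn i
  have := hmono h₃
  have := hnn 0
  omega

end Exchange

theorem statement12_general
    (n : ℕ) (aa : ℕ → ℤ)
    (σ : Fin (n + 2) → ℤ) (hσ : IsChangemaker (n + 2) σ)
    (φ : (Fin (n + 1) → ℤ) ≃ₗ[ℤ] perp σ)
    (hφ : ∀ v w : Fin (n + 1) → ℤ,
      CForm n aa v w = dotF (φ v : Fin (n + 2) → ℤ) (φ w : Fin (n + 2) → ℤ))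
    (k₁ k₂ k₃ : Fin (n + 2)) (hk₁ : 0 < k₁) (hk₁₂ : k₁ < k₂) (hk₂₃ : k₂ < k₃)
    (hx0 : (φ (Pi.single 0 1) : Fin (n + 2) → ℤ) =
        Pi.single 0 1 + Pi.single k₁ 1 + Pi.single k₂ 1 - Pi.single k₃ 1 ∨
      (φ (Pi.single 0 1) : Fin (n + 2) → ℤ) =
        Pi.single 0 1 - Pi.single k₁ 1 - Pi.single k₂ 1 + Pi.single k₃ 1)
     :
    ∀ j : Fin (n + 2), 0 < j → j ≠ k₃ →
      ∀ vj : Fin (n + 2) → ℤ, IsStdBasisVec σ j vj →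
        0 ≤ dotF vj (φ (Pi.single 0 1) : Fin (n + 2) → ℤ) := by
  intro j hj hjk₃ vj hvj
  have hpar : ∀ v ∈ perp σ, 2 ∣ dotF v (φ (Pi.single 0 1) : Fin (n + 2) → ℤ) :=
    fun v hv => two_dvd_dotF_of_mem_perp φ hφ hv
  rcases hvj with ⟨-, rfl⟩ | ⟨-, A, hA, rfl⟩
  · have hbounds := tightVec_pairing_nonneg hj hk₁ hk₁₂ hk₂₃ hjk₃
    rcases hx0 with h | h
    · rw [h, dotF_single_add_add_sub]; exact hbounds.1
    · rw [h, dotF_single_sub_sub_add]; exact hbounds.2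
  suffices -2 < dotF (subsetVec (n + 2) A j) (φ (Pi.single 0 1) : Fin (n + 2) → ℤ) by
    have := hpar _ hA.subsetVec_mem_perp
    omega
  rcases hx0 with h | h
  · have := neg_one_le_subsetVec_add_add_sub hA.1 hj hk₁₂ hk₂₃
    rw [h, dotF_single_add_add_sub]
    omega
  have hx₀σ : σ k₁ + σ k₂ = σ 0 + σ k₃ := by
    have := (φ (Pi.single 0 1)).2
    change dotF _ σ = 0 at this
    rw [dotF_comm, h, dotF_single_sub_sub_add] at this
    omega
  rcases neg_one_le_subsetVec_sub_sub_add_or hA.1 hj hk₁₂ hk₂₃ hjk₃ with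
    hge | ⟨hk₁A, hk₂A, h₀A, hk₃A⟩
  · rw [h, dotF_single_sub_sub_add]
    omega
  rcases lt_or_gt_of_ne hjk₃ with hj₃ | hj₃
  · -- `σ₀ = 0` puts `e₀` in `(σ)^⊥`, but `⟨e₀, x₀⟩ = 1` is odd
    have hσ₀ := hA.eq_zero_of_pair_mem hσ.1 hσ.2.1 hk₁₂.ne hj₃.le hx₀σ hk₁A hk₂A
    have hodd := hpar _ (single_mem_perp hσ₀)
    rw [h, dotF_single_sub_sub_add] at hodd
    simp [hk₁.ne', (hk₁.trans hk₁₂).ne', (hk₁.trans (hk₁₂.trans hk₂₃)).ne'] at hodd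
  · exact (hA.false_of_swap hk₁ hk₁₂ hk₂₃ hj₃ hx₀σ hk₁A hk₂A h₀A hk₃A).elim

/-- Lemma 4.17: for every `j ≠ k_3`, `⟨v_j, x_0⟩ ≥ 0`. -/
theorem statement12
    (n : ℕ) (aa : ℕ → ℤ) (hC : CTypeParams n aa)
    (σ : Fin (n + 2) → ℤ) (hσ : IsChangemaker (n + 2) σ)
    (φ : (Fin (n + 1) → ℤ) ≃ₗ[ℤ] perp σ)
    (hφ : ∀ v w : Fin (n + 1) → ℤ,
      CForm n aa v w = dotF (φ v : Fin (n + 2) → ℤ) (φ w : Fin (n + 2) → ℤ))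
    (k₁ k₂ k₃ : Fin (n + 2)) (hk₁ : 0 < k₁) (hk₁₂ : k₁ < k₂) (hk₂₃ : k₂ < k₃)
    (hx0 : (φ (Pi.single 0 1) : Fin (n + 2) → ℤ) =
        Pi.single 0 1 + Pi.single k₁ 1 + Pi.single k₂ 1 - Pi.single k₃ 1 ∨
      (φ (Pi.single 0 1) : Fin (n + 2) → ℤ) =
        Pi.single 0 1 - Pi.single k₁ 1 - Pi.single k₂ 1 + Pi.single k₃ 1)
     :
    ∀ j : Fin (n + 2), 0 < j → j ≠ k₃ →
      ∀ vj : Fin (n + 2) → ℤ, IsStdBasisVec σ j vj →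
        0 ≤ dotF vj (φ (Pi.single 0 1) : Fin (n + 2) → ℤ) :=
  statement12_general n aa σ hσ φ hφ k₁ k₂ k₃ hk₁ hk₁₂ hk₂₃ hx0

end Prism
end

section
/- Under the standing setup with k_1 = 1 and k_2 > 2 (in which case x_0 = e_0 + e_1 + e_{k_2} − e_{k_3}), one has k_3 = k_2 + 1 and the initial segment (σ_0, σ_1, …, σ_{k_3}) of σ equals (1, 1, 2, …, 2, σ_{k_2}, σ_{k_2} + 2), where the entry 2 occurs s = k_2 − 2 ≥ 1 times. -/
/-!
In the vertex coordinates `c` of the C-type lattice, `⟨c, x₀⟩ = 4c₀ - 2c₁` and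
`⟨c, c⟩ = (2c₀ - c₁)² + c₁² + ∑ (a_i - 2 - [i = 1]) c_i² + ∑ (c_i - c_{i+1})²`, where
`∑ (c_i - c_{i+1}) = c₁` since `c_{n+1} = 0`. Hence pairings with `x₀` are even, vectors of
norm `≤ 2` are orthogonal to `x₀`, the vectors of norm `3` pairing to `-2` with `x₀` are
`x₁ + ⋯ + x_r` and `-(x₀ + x₁ + ⋯ + x_r)`, and a vector pairing to `-2` with `x₀` and to `1` with
`m` of those (pairwise at `2`) has norm at least `2m + 3`.

In `(σ)^⊥` the first fact gives `σ_j ≡ (x₀)_j mod 2`, so `σ₀ = σ₁ = 1`; the norm-two vector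
`e₀ - e₁` then fixes the sign of `x₀`, and `x₀ ⊥ σ` gives `σ_{k₃} = σ_{k₂} + 2`. Both a first
entry `σ_i = 2t > 2` after `(1, 1, 2, …, 2)` and a gap `k₃ > k₂ + 1` produce a vector
violating the norm bound.
-/

namespace Prism

open Finset Matrix

section Coordinates

def zeroExtend {m : ℕ} (v : Fin m → ℤ) (j : ℕ) : ℤ := if h : j < m then v ⟨j, h⟩ else 0

@[simp]
lemma zeroExtend_val {m : ℕ} (v : Fin m → ℤ) (i : Fin m) : zeroExtend v i = v i := by
  simp [zeroExtend]

lemma zeroExtend_of_le {m : ℕ} (v : Fin m → ℤ) {j : ℕ} (h : m ≤ j) : zeroExtend v j = 0 := by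
  simp [zeroExtend, not_lt.mpr h]

lemma sum_univ_eq_sum_range_zeroExtend {m : ℕ} (f : ℕ → ℤ) (v : Fin m → ℤ) :
    ∑ i : Fin m, f i * v i = ∑ i ∈ range m, f i * zeroExtend v i := by
  rw [← Fin.sum_univ_eq_sum_range]
  simp

lemma sum_range_ite_mul {m : ℕ} (v : Fin m → ℤ) (k : ℕ) :
    ∑ i ∈ range m, (if i = k then 1 else 0) * zeroExtend v i = zeroExtend v k := by
  simp only [ite_mul, one_mul, zero_mul, sum_ite_eq', mem_range]
  split_ifs with h
  · rfl
  · exact (zeroExtend_of_le v (not_lt.mp h)).symm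

lemma sum_Iio_eq_sum_range {m : ℕ} (j : Fin m) (g : ℕ → ℤ) :
    ∑ i ∈ Iio j, g i = ∑ l ∈ range j, g l := by
  rw [← Nat.Iio_eq_range, ← Fin.map_valEmbedding_Iio, sum_map]
  rfl

end Coordinates

section CTypeForm

variable {n : ℕ} {a : ℕ → ℤ}

def gramDiag (a : ℕ → ℤ) (i : ℕ) : ℤ := if i = 0 then 4 else a i

def gramOff (i : ℕ) : ℤ := if i = 0 then -2 else -1

/-- Row `i` of the tridiagonal matrix `CGram` applied to `W`; the `if` guards against
`0 - 1 = 0` in `ℕ`. -/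
def gramMul (a : ℕ → ℤ) (W : ℕ → ℤ) (i : ℕ) : ℤ :=
  gramDiag a i * W i + gramOff i * W (i + 1) + if i = 0 then 0 else gramOff (i - 1) * W (i - 1)

lemma CGram_apply (i j : Fin (n + 1)) :
    CGram n a i j = (if (j : ℕ) = i then 1 else 0) * gramDiag a i
      + (if (j : ℕ) = i + 1 then 1 else 0) * gramOff i
      + if (i : ℕ) = 0 then 0 else (if (j : ℕ) = i - 1 then 1 else 0) * gramOff (i - 1) := by
  unfold CGram gramDiag gramOff
  split_ifs <;> omega

lemma sum_CGram_mul (w : Fin (n + 1) → ℤ) (i : Fin (n + 1)) :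
    ∑ j, CGram n a i j * w j = gramMul a (zeroExtend w) i := by
  simp only [CGram_apply]
  rw [sum_univ_eq_sum_range_zeroExtend
    (fun j => (if j = i then 1 else 0) * gramDiag a i + (if j = (i : ℕ) + 1 then 1 else 0) *
      gramOff i + if (i : ℕ) = 0 then 0 else (if j = i - 1 then 1 else 0) * gramOff (i - 1))]
  unfold gramMul
  split_ifs <;>
  simp only [add_zero, add_mul, sum_add_distrib, mul_right_comm _ (gramDiag a i),
    mul_right_comm _ (gramOff _), ← sum_mul, sum_range_ite_mul] <;> ring

lemma CForm_eq_sum_gramMul (v w : Fin (n + 1) → ℤ) :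
    CForm n a v w = ∑ i ∈ range (n + 1), gramMul a (zeroExtend w) i * zeroExtend v i := by
  rw [← sum_univ_eq_sum_range_zeroExtend]
  refine sum_congr rfl fun i _ => ?_
  rw [← sum_CGram_mul, sum_mul]
  exact sum_congr rfl fun j _ => by ring

lemma zeroExtend_single_zero (j : ℕ) :
    zeroExtend (Pi.single (0 : Fin (n + 1)) (1 : ℤ)) j = if j = 0 then 1 else 0 := by
  unfold zeroExtend
  split_ifs <;> simp_all [Pi.single_apply, Fin.ext_iff]

lemma zeroExtend_intVec {k : ℕ} (hk : k < n) (j : ℕ) :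
    zeroExtend (intVec n 1 (k + 1)) j = if 1 ≤ j ∧ j ≤ k + 1 then 1 else 0 := by
  unfold zeroExtend intVec
  split_ifs <;> first | rfl | omega

lemma CForm_single_zero (c : Fin (n + 1) → ℤ) :
    CForm n a c (Pi.single 0 1) = 4 * zeroExtend c 0 - 2 * zeroExtend c 1 := by
  have hrow : ∀ i, gramMul a (zeroExtend (Pi.single (0 : Fin (n + 1)) (1 : ℤ))) i =
      4 * (if i = 0 then 1 else 0) - 2 * (if i = 1 then 1 else 0) := by
    intro i
    simp only [gramMul, gramDiag, gramOff, zeroExtend_single_zero]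
    split_ifs <;> first | contradiction | omega
  simp only [CForm_eq_sum_gramMul, hrow, sub_mul, mul_assoc, sum_sub_distrib, ← mul_sum,
    sum_range_ite_mul]

lemma CForm_intVec {k : ℕ} (hk : k < n) (ha₁ : a 1 = 3) (ha : ∀ i, 2 ≤ i → i ≤ k + 1 → a i = 2)
    (c : Fin (n + 1) → ℤ) :
    CForm n a c (intVec n 1 (k + 1)) = -2 * zeroExtend c 0 + 2 * zeroExtend c 1
      + zeroExtend c (k + 1) - zeroExtend c (k + 2) := by
  have hrow : ∀ i, gramMul a (zeroExtend (intVec n 1 (k + 1))) i =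
      -2 * (if i = 0 then 1 else 0) + 2 * (if i = 1 then 1 else 0)
        + (if i = k + 1 then 1 else 0) - (if i = k + 2 then 1 else 0) := by
    rintro (_ | _ | i)
    · simp only [gramMul, gramDiag, gramOff, zeroExtend_intVec hk]
      split_ifs <;> first | contradiction | omega
    · simp only [gramMul, gramDiag, gramOff, zeroExtend_intVec hk, ha₁]
      split_ifs <;> first | contradiction | omega
    · simp only [gramMul, gramDiag, gramOff, zeroExtend_intVec hk]
      by_cases h : i + 1 + 1 ≤ k + 1
      · rw [ha _ (by omega) h]
        split_ifs <;> first | contradiction | omega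
      · split_ifs <;> first | contradiction | omega
  simp only [CForm_eq_sum_gramMul, hrow, add_mul, sub_mul, mul_assoc, sum_add_distrib,
    sum_sub_distrib, ← mul_sum, sum_range_ite_mul]

lemma CForm_self (c : Fin (n + 1) → ℤ) :
    CForm n a c c = (2 * zeroExtend c 0 - zeroExtend c 1) ^ 2 + zeroExtend c 1 ^ 2
      + ∑ i ∈ range n, (a (i + 1) - if i = 0 then 3 else 2) * zeroExtend c (i + 1) ^ 2
      + ∑ i ∈ range n, (zeroExtend c (i + 1) - zeroExtend c (i + 2)) ^ 2 := by
  rw [CForm_eq_sum_gramMul]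
  set C := zeroExtend c
  cases n with
  | zero =>
    have hC : C 1 = 0 := zeroExtend_of_le c le_rfl
    rw [sum_range_one, range_zero, sum_empty, sum_empty]
    simp only [gramMul, gramDiag, gramOff, ↓reduceIte, hC]
    ring
  | succ p =>
    have hC : C (p + 2) = 0 := zeroExtend_of_le c le_rfl
    have hsq : ∑ i ∈ range p, (C (i + 1 + 2) ^ 2 - C (i + 2) ^ 2) = -C 2 ^ 2 := by
      rw [sum_range_sub (fun i => C (i + 2) ^ 2), hC]
      ring
    have hprod : ∑ i ∈ range p, (C (i + 1) * C (i + 2) - C (i + 1 + 1) * C (i + 1 + 2))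
        = C 1 * C 2 := by
      rw [sum_range_sub' (fun i => C (i + 1) * C (i + 2)), hC]
      ring
    have hsplit : ∑ i ∈ range p, (a (i + 1 + 1) - if i + 1 = 0 then 3 else 2) * C (i + 1 + 1) ^ 2
          + ∑ i ∈ range p, (C (i + 1 + 1) - C (i + 1 + 2)) ^ 2
        = ∑ i ∈ range p, gramMul a C (i + 1 + 1) * C (i + 1 + 1)
          + ∑ i ∈ range p, (C (i + 1 + 2) ^ 2 - C (i + 2) ^ 2)
          + ∑ i ∈ range p, (C (i + 1) * C (i + 2) - C (i + 1 + 1) * C (i + 1 + 2)) := by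
      simp only [← sum_add_distrib]
      refine sum_congr rfl fun i _ => ?_
      simp only [gramMul, gramDiag, gramOff, Nat.add_eq_zero_iff, one_ne_zero, and_false,
        if_false, Nat.add_sub_cancel]
      ring
    have h0 : gramMul a C 0 = 4 * C 0 - 2 * C 1 := by
      simp only [gramMul, gramDiag, gramOff, ↓reduceIte]
      ring
    have h1 : gramMul a C (0 + 1) = a 1 * C 1 - C 2 - 2 * C 0 := by
      simp only [gramMul, gramDiag, gramOff, zero_add, one_ne_zero, ↓reduceIte, tsub_self]
      ring
    rw [sum_range_succ', sum_range_succ', sum_range_succ', sum_range_succ', h0, h1, if_pos rfl]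
    linear_combination -hsplit - hsq - hprod

end CTypeForm

section IntegerSums

lemma abs_sum_le_sum_sq {ι : Type*} (s : Finset ι) (d : ι → ℤ) :
    |∑ i ∈ s, d i| ≤ ∑ i ∈ s, d i ^ 2 :=
  (abs_sum_le_sum_abs d s).trans <| sum_le_sum fun i _ => by
    rw [Int.abs_eq_natAbs]
    exact Int.natAbs_le_self_sq (d i)

lemma exists_forall_eq_zero_of_sum_sq_eq_one {ι : Type*} [DecidableEq ι] {s : Finset ι}
    {f : ι → ℤ} (h : ∑ i ∈ s, f i ^ 2 = 1) : ∃ k ∈ s, ∀ i ∈ s, i ≠ k → f i = 0 := by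
  obtain ⟨k, hk, hfk⟩ := exists_ne_zero_of_sum_ne_zero (h ▸ one_ne_zero : ∑ i ∈ s, f i ^ 2 ≠ 0)
  have hrest : ∑ i ∈ s.erase k, f i ^ 2 = 0 := by
    have := add_sum_erase s (fun i => f i ^ 2) hk
    have := sq_nonneg (f k)
    have : 0 ≤ ∑ i ∈ s.erase k, f i ^ 2 := sum_nonneg fun i _ => sq_nonneg (f i)
    have : f k ^ 2 ≠ 0 := hfk
    omega
  refine ⟨k, hk, fun i hi hik => ?_⟩
  rw [sum_eq_zero_iff_of_nonneg fun i _ => sq_nonneg (f i)] at hrest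
  exact pow_eq_zero_iff two_ne_zero |>.mp (hrest i (mem_erase.mpr ⟨hik, hi⟩))

/-- Outside `D` the `d i` sum to `(#D + 1) u`, which costs at least `#D + 1` in squares. -/
lemma two_mul_card_add_one_le_sum_sq {ι : Type*} [DecidableEq ι] {s D : Finset ι} (hD : D ⊆ s)
    {d : ι → ℤ} {u : ℤ} (hu : u ≠ 0) (hs : ∑ i ∈ s, d i = u) (hDu : ∀ i ∈ D, d i = -u) :
    2 * #D + 1 ≤ ∑ i ∈ s, d i ^ 2 := by
  have hsum := sum_sdiff hD (f := d)
  have hsq := sum_sdiff hD (f := fun i => d i ^ 2)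
  rw [sum_congr rfl hDu, sum_const, nsmul_eq_mul] at hsum
  have hDsq : ∑ i ∈ D, d i ^ 2 = #D * u ^ 2 := by
    rw [sum_congr rfl fun i hi => by rw [hDu i hi, neg_sq], sum_const, nsmul_eq_mul]
  have hout : ((#D : ℤ) + 1) * |u| ≤ ∑ i ∈ s \ D, d i ^ 2 := by
    have h := abs_sum_le_sum_sq (s \ D) d
    rwa [show ∑ i ∈ s \ D, d i = (#D + 1) * u by linarith, abs_mul,
      abs_of_nonneg (by positivity)] at h
  have hu1 : 1 ≤ |u| := Int.one_le_abs hu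
  have hu2 : 1 ≤ u ^ 2 := by nlinarith [sq_abs u]
  nlinarith

lemma exists_eq_ite_of_sum_sq_sub_eq_one {n : ℕ} {C : ℕ → ℤ} (hC : C (n + 1) = 0)
    (h : ∑ i ∈ range n, (C (i + 1) - C (i + 2)) ^ 2 = 1) :
    ∃ k < n, ∀ j ≤ n, C (j + 1) = if j ≤ k then C 1 else 0 := by
  obtain ⟨k, hk, hzero⟩ := exists_forall_eq_zero_of_sum_sq_eq_one h
  rw [mem_range] at hk
  have hC' : ∀ j ≤ n, C (j + 1) = if j ≤ k then C 1 else C 1 - (C (k + 1) - C (k + 2)) := by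
    intro j hj
    induction j with
    | zero => simp
    | succ j ih =>
      show C (j + 2) = _
      have hd := hzero j (mem_range.mpr (by omega))
      have ih := ih (by omega)
      by_cases hjk : j = k
      · subst hjk
        rw [if_pos le_rfl] at ih
        rw [if_neg (by omega)]
        linarith
      · have := hd hjk
        split_ifs at ih ⊢ <;> omega
  have hstep : C (k + 1) - C (k + 2) = C 1 := by
    have := hC' n le_rfl
    rw [if_neg (by omega), hC] at this
    linarith
  exact ⟨k, hk, fun j hj => by rw [hC' j hj, hstep, sub_self]⟩

end IntegerSums

section SmallVectors

variable {n : ℕ} {a : ℕ → ℤ}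

lemma sum_range_zeroExtend_sub (c : Fin (n + 1) → ℤ) :
    ∑ i ∈ range n, (zeroExtend c (i + 1) - zeroExtend c (i + 2)) = zeroExtend c 1 := by
  have h : ∑ i ∈ range n, (zeroExtend c (i + 1) - zeroExtend c (i + 2))
      = zeroExtend c 1 - zeroExtend c (n + 1) := sum_range_sub' (fun i => zeroExtend c (i + 1)) n
  rw [h, zeroExtend_of_le c le_rfl, sub_zero]

lemma abs_zeroExtend_one_le (c : Fin (n + 1) → ℤ) :
    |zeroExtend c 1| ≤ ∑ i ∈ range n, (zeroExtend c (i + 1) - zeroExtend c (i + 2)) ^ 2 :=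
  sum_range_zeroExtend_sub c ▸ abs_sum_le_sum_sq _ _

lemma CTypeParams.ite_le (hC : CTypeParams n a) {i : ℕ} (hi : i < n) :
    (if i = 0 then 3 else 2) ≤ a (i + 1) := by
  obtain ⟨-, ha, ha₁⟩ := hC
  split_ifs with h
  · rwa [h]
  · exact ha (i + 1) (by omega) (by omega)

lemma CTypeParams.sum_sub_ite_mul_sq_nonneg (hC : CTypeParams n a) (c : Fin (n + 1) → ℤ) :
    0 ≤ ∑ i ∈ range n, (a (i + 1) - if i = 0 then 3 else 2) * zeroExtend c (i + 1) ^ 2 :=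
  sum_nonneg fun _ hi => mul_nonneg (sub_nonneg.mpr (hC.ite_le (mem_range.mp hi))) (sq_nonneg _)

lemma CForm_single_zero_eq_zero_of_le_two (hC : CTypeParams n a) {c : Fin (n + 1) → ℤ}
    (hc : CForm n a c c ≤ 2) : CForm n a c (Pi.single 0 1) = 0 := by
  have hQ := CForm_self (a := a) c
  have hW := hC.sum_sub_ite_mul_sq_nonneg c
  have hT := abs_zeroExtend_one_le c
  rw [CForm_single_zero]
  set x := zeroExtend c 0
  set y := zeroExtend c 1
  rcases eq_or_ne y 0 with hy | hy
  · rw [hy] at hQ hT ⊢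
    by_contra hx
    have : 1 ≤ x ^ 2 := by nlinarith [Int.one_le_abs (show x ≠ 0 by omega), sq_abs x]
    nlinarith [abs_nonneg (0 : ℤ)]
  · have : 1 ≤ |y| := Int.one_le_abs hy
    have : 1 ≤ y ^ 2 := by nlinarith [sq_abs y]
    have : (2 * x - y) ^ 2 = 0 := by nlinarith [sq_nonneg (2 * x - y)]
    have := pow_eq_zero_iff two_ne_zero |>.mp this
    omega

lemma eq_smul_intVec_add_smul_single {c : Fin (n + 1) → ℤ} {k : ℕ}
    (hstep : ∀ j ≤ n, zeroExtend c (j + 1) = if j ≤ k then zeroExtend c 1 else 0) :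
    c = zeroExtend c 1 • intVec n 1 (k + 1) + zeroExtend c 0 • Pi.single 0 1 := by
  funext l
  rw [← zeroExtend_val c l]
  simp only [Pi.add_apply, Pi.smul_apply, smul_eq_mul, intVec, Pi.single_apply, Fin.ext_iff,
    Fin.val_zero]
  obtain ⟨_ | j, hj⟩ : ∃ j, (l : ℕ) = j := ⟨l, rfl⟩
  · simp [hj]
  · rw [hj, hstep j (by omega)]
    split_ifs <;> first | contradiction | omega

lemma eq_intVec_of_CForm_self_eq_three (hC : CTypeParams n a) {c : Fin (n + 1) → ℤ}
    (hc : CForm n a c c = 3) (hc₀ : CForm n a c (Pi.single 0 1) = -2) :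
    ∃ k < n, a 1 = 3 ∧ (∀ i, 2 ≤ i → i ≤ k + 1 → a i = 2) ∧
      (c = intVec n 1 (k + 1) ∨ c = -intVec n 1 (k + 1) - Pi.single 0 1) := by
  have hQ := CForm_self (a := a) c
  have hW := hC.sum_sub_ite_mul_sq_nonneg c
  have hT := abs_zeroExtend_one_le c
  rw [CForm_single_zero] at hc₀
  set C := zeroExtend c
  have hC1 : C 1 = 2 * C 0 + 1 := by omega
  have hC1abs : 1 ≤ |C 1| := Int.one_le_abs (by omega)
  have hC1sq : 1 ≤ C 1 ^ 2 := by nlinarith [sq_abs (C 1)]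
  have hC01 : (2 * C 0 - C 1) ^ 2 = 1 := by rw [hC1]; ring
  have hC1one : C 1 ^ 2 = 1 := by linarith
  obtain ⟨k, hk, hstep⟩ : ∃ k < n, ∀ j ≤ n, C (j + 1) = if j ≤ k then C 1 else 0 :=
    exists_eq_ite_of_sum_sq_sub_eq_one (zeroExtend_of_le c le_rfl) (by linarith)
  have hterm := (sum_eq_zero_iff_of_nonneg fun i hi => mul_nonneg
    (sub_nonneg.mpr (hC.ite_le (mem_range.mp hi))) (sq_nonneg (C (i + 1)))).mp (by linarith)
  have ha : ∀ i ≤ k, a (i + 1) = if i = 0 then 3 else 2 := by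
    intro i hi
    have h := hterm i (mem_range.mpr (by omega))
    rw [hstep i (by omega), if_pos hi, hC1one, mul_one] at h
    linarith
  refine ⟨k, hk, by simpa using ha 0 (Nat.zero_le k), fun i hi hik => ?_, ?_⟩
  · obtain ⟨j, rfl⟩ : ∃ j, i = j + 1 := ⟨i - 1, by omega⟩
    simpa [show j ≠ 0 by omega] using ha j (by omega)
  · have hc : c = C 1 • intVec n 1 (k + 1) + C 0 • Pi.single 0 1 :=
      eq_smul_intVec_add_smul_single hstep
    have : (C 1 - 1) * (C 1 + 1) = 0 := by linear_combination hC1one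
    rcases mul_eq_zero.mp this with h | h
    · left
      rw [hc, show C 1 = 1 by omega, show C 0 = 0 by omega, one_smul, zero_smul, add_zero]
    · right
      rw [hc, show C 1 = -1 by omega, show C 0 = -1 by omega, neg_one_smul, neg_one_smul,
        sub_eq_add_neg]

lemma two_mul_card_add_three_le_CForm_self (hC : CTypeParams n a) {c : Fin (n + 1) → ℤ}
    (hc₀ : CForm n a c (Pi.single 0 1) = -2) {R : Finset ℕ} (hR : R ⊆ range n)
    (hRc : ∀ k ∈ R, zeroExtend c (k + 1) - zeroExtend c (k + 2) = -zeroExtend c 1) :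
    2 * #R + 3 ≤ CForm n a c c := by
  have hQ := CForm_self (a := a) c
  have hW := hC.sum_sub_ite_mul_sq_nonneg c
  rw [CForm_single_zero] at hc₀
  set C := zeroExtend c
  have hC1 : C 1 = 2 * C 0 + 1 := by omega
  have hC1ne : C 1 ≠ 0 := by omega
  have hT := two_mul_card_add_one_le_sum_sq hR hC1ne (sum_range_zeroExtend_sub c) hRc
  have hC1sq : 1 ≤ C 1 ^ 2 := by nlinarith [sq_abs (C 1), Int.one_le_abs hC1ne]
  have hC01 : (2 * C 0 - C 1) ^ 2 = 1 := by rw [hC1]; ring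
  linarith

end SmallVectors

section Isometry

variable {n m : ℕ} {a : ℕ → ℤ} {σ : Fin m → ℤ} {φ : (Fin (n + 1) → ℤ) ≃ₗ[ℤ] perp σ}

lemma mem_perp_iff {v : Fin m → ℤ} : v ∈ perp σ ↔ v ⬝ᵥ σ = 0 := Iff.rfl

lemma exists_image_eq {w : Fin m → ℤ} (hw : w ∈ perp σ) : ∃ c, (φ c : Fin m → ℤ) = w :=
  ⟨φ.symm ⟨w, hw⟩, by simp⟩

lemma even_dotProduct_image_single_zero
    (hφ : ∀ v w, CForm n a v w = (φ v : Fin m → ℤ) ⬝ᵥ (φ w : Fin m → ℤ))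
    {w : Fin m → ℤ} (hw : w ∈ perp σ) : Even (w ⬝ᵥ (φ (Pi.single 0 1) : Fin m → ℤ)) := by
  obtain ⟨c, rfl⟩ := exists_image_eq (φ := φ) hw
  rw [← hφ, CForm_single_zero]
  exact ⟨2 * zeroExtend c 0 - zeroExtend c 1, by ring⟩

lemma dotProduct_image_single_zero_eq_zero (hC : CTypeParams n a)
    (hφ : ∀ v w, CForm n a v w = (φ v : Fin m → ℤ) ⬝ᵥ (φ w : Fin m → ℤ))
    {w : Fin m → ℤ} (hw : w ∈ perp σ) (hww : w ⬝ᵥ w ≤ 2) :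
    w ⬝ᵥ (φ (Pi.single 0 1) : Fin m → ℤ) = 0 := by
  obtain ⟨c, rfl⟩ := exists_image_eq (φ := φ) hw
  rw [← hφ] at hww ⊢
  exact CForm_single_zero_eq_zero_of_le_two hC hww

lemma exists_image_intVec_eq (hC : CTypeParams n a)
    (hφ : ∀ v w, CForm n a v w = (φ v : Fin m → ℤ) ⬝ᵥ (φ w : Fin m → ℤ))
    {y : Fin m → ℤ} (hy : y ∈ perp σ) (hyy : y ⬝ᵥ y = 3)
    (hyX : y ⬝ᵥ (φ (Pi.single 0 1) : Fin m → ℤ) = -2) :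
    ∃ k < n, a 1 = 3 ∧ (∀ i, 2 ≤ i → i ≤ k + 1 → a i = 2) ∧
      ((φ (intVec n 1 (k + 1)) : Fin m → ℤ) = y ∨
        (φ (intVec n 1 (k + 1)) : Fin m → ℤ) = -y - (φ (Pi.single 0 1) : Fin m → ℤ)) := by
  obtain ⟨c, rfl⟩ := exists_image_eq (φ := φ) hy
  rw [← hφ] at hyy hyX
  obtain ⟨k, hk, ha₁, ha, hc | hc⟩ := eq_intVec_of_CForm_self_eq_three hC hyy hyX
  · exact ⟨k, hk, ha₁, ha, Or.inl (by rw [hc])⟩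
  · refine ⟨k, hk, ha₁, ha, Or.inr ?_⟩
    rw [show intVec n 1 (k + 1) = -c - Pi.single 0 1 by rw [hc]; abel, map_sub, map_neg]
    rfl

lemma dotProduct_ne_two_of_eq_or_eq {X y y' z : Fin m → ℤ} (hz : z = y ∨ z = -y - X)
    (hz' : z = y' ∨ z = -y' - X) (hyy : y ⬝ᵥ y = 3) (hyy' : y' ⬝ᵥ y' = 3) (hyX : y ⬝ᵥ X = -2)
    (hy'X : y' ⬝ᵥ X = -2) : y ⬝ᵥ y' ≠ 2 := by
  rcases hz with h | h <;> rcases hz' with h' | h'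
  · rw [h.symm.trans h', hyy']
    norm_num
  · rw [h.symm.trans h', sub_dotProduct, neg_dotProduct, hyy', dotProduct_comm X, hy'X]
    norm_num
  · rw [h'.symm.trans h, dotProduct_sub, dotProduct_neg, hyy, hyX]
    norm_num
  · rw [show y = y' by simpa using h.symm.trans h', hyy']
    norm_num

/-- The vectors `y i` come from distinct intervals `x₁ + ⋯ + x_{k+1}`, each of which forces a
jump `c_{k+1} - c_{k+2} = -c_1` in the coordinates of `φ⁻¹ v`. -/
lemma two_mul_card_add_three_le_dotProduct_self (hC : CTypeParams n a)
    (hφ : ∀ v w, CForm n a v w = (φ v : Fin m → ℤ) ⬝ᵥ (φ w : Fin m → ℤ))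
    {v : Fin m → ℤ} (hv : v ∈ perp σ) (hvX : v ⬝ᵥ (φ (Pi.single 0 1) : Fin m → ℤ) = -2)
    {ι : Type*} {s : Finset ι} {y : ι → Fin m → ℤ}
    (hy : ∀ i ∈ s, y i ∈ perp σ ∧ y i ⬝ᵥ y i = 3 ∧
      y i ⬝ᵥ (φ (Pi.single 0 1) : Fin m → ℤ) = -2 ∧ v ⬝ᵥ y i = 1)
    (hyy : ∀ i ∈ s, ∀ j ∈ s, i ≠ j → y i ⬝ᵥ y j = 2) :
    2 * #s + 3 ≤ v ⬝ᵥ v := by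
  classical
  obtain ⟨c, rfl⟩ := exists_image_eq (φ := φ) hv
  have hc₀ : CForm n a c (Pi.single 0 1) = -2 := (hφ _ _).trans hvX
  choose! k hk ha₁ ha hky using fun i hi =>
    exists_image_intVec_eq hC hφ (hy i hi).1 (hy i hi).2.1 (hy i hi).2.2.1
  have hjump : ∀ i ∈ s, zeroExtend c (k i + 1) - zeroExtend c (k i + 2) = -zeroExtend c 1 := by
    intro i hi
    have hpair : CForm n a c (intVec n 1 (k i + 1)) = 1 := by
      rw [hφ]
      rcases hky i hi with h | h
      · rw [h, (hy i hi).2.2.2]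
      · rw [h, dotProduct_sub, dotProduct_neg, (hy i hi).2.2.2, hvX]
        norm_num
    rw [CForm_intVec (hk i hi) (ha₁ i hi) (ha i hi)] at hpair
    rw [CForm_single_zero] at hc₀
    linarith
  have hinj : Set.InjOn k s := by
    intro i hi j hj hkij
    by_contra hij
    have hj' := hky j hj
    rw [← hkij] at hj'
    exact dotProduct_ne_two_of_eq_or_eq (hky i hi) hj' (hy i hi).2.1 (hy j hj).2.1
      (hy i hi).2.2.1 (hy j hj).2.2.1 (hyy i hi j hj hij)
  calc 2 * (#s : ℤ) + 3 = 2 * #(s.image k) + 3 := by rw [card_image_of_injOn hinj]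
    _ ≤ CForm n a c c := two_mul_card_add_three_le_CForm_self hC hc₀
        (fun _ h => by obtain ⟨i, hi, rfl⟩ := mem_image.mp h; exact mem_range.mpr (hk i hi))
        (fun _ h => by obtain ⟨i, hi, rfl⟩ := mem_image.mp h; exact hjump i hi)
    _ = _ := hφ c c

end Isometry

section Changemaker

variable {m : ℕ} {σ : Fin m → ℤ}

lemma IsChangemaker.le_one_add_sum_Iio (hσ : IsChangemaker m σ) (j : Fin m) :
    σ j ≤ 1 + ∑ i ∈ Iio j, σ i := by
  obtain ⟨hmono, hnn, hrep⟩ := hσ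
  by_contra! hj
  have hpos : 0 ≤ ∑ i ∈ Iio j, σ i := sum_nonneg fun i _ => hnn i
  have htotal : ∑ i ∈ insert j (Iio j), σ i ≤ ∑ i, σ i :=
    sum_le_sum_of_subset_of_nonneg (subset_univ _) fun i _ _ => hnn i
  rw [sum_insert (by simp)] at htotal
  obtain ⟨S, hS⟩ := hrep (1 + ∑ i ∈ Iio j, σ i) (by linarith) (by linarith)
  by_cases hSj : S ⊆ Iio j
  · linarith [sum_le_sum_of_subset_of_nonneg hSj fun i _ _ => hnn i]
  · obtain ⟨l, hlS, hl⟩ := not_subset.mp hSj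
    have hjl : σ j ≤ σ l := hmono (not_lt.mp (by simpa using hl))
    linarith [single_le_sum (fun i _ => hnn i) hlS]

lemma even_mul_sub_mul_of_forall_even {X : Fin m → ℤ} (hX : ∀ w ∈ perp σ, Even (w ⬝ᵥ X))
    (i j : Fin m) : Even (σ j * X i - σ i * X j) := by
  have hw : Pi.single i (σ j) - Pi.single j (σ i) ∈ perp σ := by
    rw [mem_perp_iff, sub_dotProduct, single_dotProduct, single_dotProduct, mul_comm, sub_self]
  simpa [sub_dotProduct, single_dotProduct] using hX _ hw

/-- If `σ 0 = 0` then `e₀ ∈ (σ)^⊥`, whose pairing with `X` is odd. -/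
lemma IsChangemaker.apply_zero_eq_one {σ : Fin (m + 1) → ℤ} (hσ : IsChangemaker (m + 1) σ)
    {X : Fin (m + 1) → ℤ} (hX : ∀ w ∈ perp σ, Even (w ⬝ᵥ X)) (hX₀ : Odd (X 0)) : σ 0 = 1 := by
  have hle := hσ.le_one_add_sum_Iio 0
  rw [sum_eq_zero fun i hi => absurd (mem_Iio.mp hi) (Fin.not_lt_zero i), add_zero] at hle
  have hne : σ 0 ≠ 0 := by
    intro h0
    have h := hX (Pi.single 0 1) (by rw [mem_perp_iff, single_dotProduct, h0, mul_zero])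
    rw [single_dotProduct, one_mul] at h
    exact Int.not_even_iff_odd.mpr hX₀ h
  have := hσ.2.1 0
  omega

lemma sum_range_ite_lt_two (L : ℕ) (hL : 2 ≤ L) :
    ∑ l ∈ range L, (if l < 2 then (1 : ℤ) else 2) = 2 * L - 2 := by
  induction L, hL using Nat.le_induction with
  | base => simp [sum_range_succ]
  | succ L hL ih =>
    rw [sum_range_succ, ih, if_neg (by omega)]
    push_cast
    ring

lemma sum_Iio_eq_two_mul_sub_two {J : Fin m} (hJ : 2 ≤ (J : ℕ))
    (h : ∀ l < J, σ l = if (l : ℕ) < 2 then 1 else 2) : ∑ l ∈ Iio J, σ l = 2 * J - 2 := by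
  rw [sum_congr rfl fun l hl => h l (mem_Iio.mp hl),
    sum_Iio_eq_sum_range J (fun l => if l < 2 then 1 else 2), sum_range_ite_lt_two J hJ]

end Changemaker

section SpecialVectors

variable {m : ℕ}

def tripleVec (p q r : Fin m) : Fin m → ℤ := Pi.single p 1 - Pi.single q 1 - Pi.single r 1

def prefixVec (J : Fin m) : Fin m → ℤ := ∑ l ∈ Iio J, Pi.single l 1

lemma tripleVec_apply (p q r l : Fin m) :
    tripleVec p q r l = (if l = p then 1 else 0) - (if l = q then 1 else 0)
      - if l = r then 1 else 0 := by
  simp [tripleVec, Pi.single_apply]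

lemma tripleVec_dotProduct (p q r : Fin m) (w : Fin m → ℤ) :
    tripleVec p q r ⬝ᵥ w = w p - w q - w r := by
  simp [tripleVec, sub_dotProduct]

lemma dotProduct_tripleVec (p q r : Fin m) (w : Fin m → ℤ) :
    w ⬝ᵥ tripleVec p q r = w p - w q - w r := by
  rw [dotProduct_comm, tripleVec_dotProduct]

lemma tripleVec_dotProduct_self {p q r : Fin m} (hpq : p ≠ q) (hpr : p ≠ r) (hqr : q ≠ r) :
    tripleVec p q r ⬝ᵥ tripleVec p q r = 3 := by
  simp only [tripleVec_dotProduct, tripleVec_apply, if_pos, hpq, hpr, hqr, hpq.symm, hpr.symm,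
    hqr.symm, if_false]
  norm_num

lemma tripleVec_dotProduct_tripleVec {p q r r' : Fin m} (hpq : p ≠ q) (hpr : p ≠ r)
    (hpr' : p ≠ r') (hqr : q ≠ r) (hqr' : q ≠ r') (hrr' : r ≠ r') :
    tripleVec p q r ⬝ᵥ tripleVec p q r' = 2 := by
  simp only [tripleVec_dotProduct, tripleVec_apply, if_pos, hpq, hpr', hqr', hrr',
    hpq.symm, hpr.symm, hqr.symm, if_false]
  norm_num

lemma prefixVec_apply (J l : Fin m) : prefixVec J l = if l < J then 1 else 0 := by
  simp [prefixVec, Finset.sum_apply, Pi.single_apply]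

lemma prefixVec_dotProduct (J : Fin m) (w : Fin m → ℤ) :
    prefixVec J ⬝ᵥ w = ∑ l ∈ Iio J, w l := by
  simp [prefixVec, sum_dotProduct]

lemma single_sub_prefixVec_apply (i J l : Fin m) :
    (Pi.single i 1 - prefixVec J : Fin m → ℤ) l
      = (if l = i then 1 else 0) - if l < J then 1 else 0 := by
  simp [prefixVec_apply, Pi.single_apply]

lemma single_sub_prefixVec_dotProduct_self {i J : Fin m} (hJi : J ≤ i) :
    (Pi.single i 1 - prefixVec J : Fin m → ℤ) ⬝ᵥ (Pi.single i 1 - prefixVec J) = J + 1 := by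
  rw [sub_dotProduct, single_dotProduct, prefixVec_dotProduct, one_mul,
    single_sub_prefixVec_apply, if_pos rfl, if_neg (not_lt.mpr hJi),
    sum_congr rfl fun l hl => by
      rw [single_sub_prefixVec_apply, if_neg (ne_of_lt (lt_of_lt_of_le (mem_Iio.mp hl) hJi)),
        if_pos (mem_Iio.mp hl)],
    sum_const, Fin.card_Iio, nsmul_eq_mul]
  ring

def fourVec (k₂ k₃ : Fin (m + 2)) : Fin (m + 2) → ℤ :=
  Pi.single 0 1 + Pi.single 1 1 + Pi.single k₂ 1 - Pi.single k₃ 1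

variable {k₂ k₃ : Fin (m + 2)}

lemma dotProduct_fourVec (w : Fin (m + 2) → ℤ) :
    w ⬝ᵥ fourVec k₂ k₃ = w 0 + w 1 + w k₂ - w k₃ := by
  simp [fourVec, dotProduct_add, dotProduct_sub]

lemma fourVec_apply_of_ne {j : Fin (m + 2)} (h₀ : j ≠ 0) (h₁ : j ≠ 1) (h₂ : j ≠ k₂)
    (h₃ : j ≠ k₃) : fourVec k₂ k₃ j = 0 := by
  simp [fourVec, h₀, h₁, h₂, h₃]

lemma fourVec_apply_left (hk₂ : 2 < (k₂ : ℕ)) (hk₂₃ : k₂ < k₃) : fourVec k₂ k₃ k₂ = 1 := by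
  have h₀ : k₂ ≠ 0 := by simp only [ne_eq, Fin.ext_iff, Fin.val_zero]; omega
  have h₁ : k₂ ≠ 1 := by simp only [ne_eq, Fin.ext_iff, Fin.val_one]; omega
  simp [fourVec, h₀, h₁, ne_of_lt hk₂₃]

lemma tripleVec_dotProduct_fourVec {j : Fin (m + 2)} (hk₂ : 2 < (k₂ : ℕ)) (hk₂₃ : k₂ < k₃)
    (hj : 2 ≤ (j : ℕ)) (hjk₂ : j ≠ k₂) (hjk₃ : j ≠ k₃) :
    tripleVec k₃ k₂ j ⬝ᵥ fourVec k₂ k₃ = -2 := by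
  have hk' : (k₂ : ℕ) < k₃ := hk₂₃
  rw [dotProduct_fourVec]
  simp only [tripleVec_apply, Fin.ext_iff, Fin.val_zero, Fin.val_one] at hjk₂ hjk₃ ⊢
  split_ifs <;> omega

lemma tripleVec_succ_dotProduct_fourVec {f : Fin (m + 2)} (hk₂ : 2 < (k₂ : ℕ)) (hk₂₃ : k₂ < k₃)
    (hf : (f : ℕ) = k₂ + 1) (hfk₃ : f ≠ k₃) : tripleVec f k₂ 0 ⬝ᵥ fourVec k₂ k₃ = -2 := by
  have hk' : (k₂ : ℕ) < k₃ := hk₂₃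
  rw [Ne, Fin.ext_iff] at hfk₃
  rw [dotProduct_fourVec]
  simp only [tripleVec_apply, Fin.ext_iff, Fin.val_zero, Fin.val_one, hf]
  split_ifs <;> first | contradiction | omega

lemma tripleVec_succ_dotProduct_tripleVec {f f₂ : Fin (m + 2)} (hk₂ : 2 < (k₂ : ℕ))
    (hk₂₃ : k₂ < k₃) (hf : (f : ℕ) = k₂ + 1) (hf₂ : (f₂ : ℕ) = 2) (hfk₃ : f ≠ k₃) :
    tripleVec f k₂ 0 ⬝ᵥ tripleVec k₃ k₂ f₂ = 1 := by
  have hk' : (k₂ : ℕ) < k₃ := hk₂₃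
  rw [Ne, Fin.ext_iff] at hfk₃
  rw [dotProduct_tripleVec]
  simp only [tripleVec_apply, Fin.ext_iff, Fin.val_zero, hf, hf₂]
  split_ifs <;> first | contradiction | omega

lemma single_sub_prefixVec_dotProduct_fourVec {i J : Fin (m + 2)} (hJ : 2 ≤ (J : ℕ))
    (hJi : J ≤ i) (hik : i < k₂) (hk₂₃ : k₂ < k₃) :
    (Pi.single i 1 - prefixVec J : Fin (m + 2) → ℤ) ⬝ᵥ fourVec k₂ k₃ = -2 := by
  rw [Fin.le_def] at hJi
  rw [Fin.lt_def] at hik hk₂₃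
  rw [dotProduct_fourVec]
  simp only [single_sub_prefixVec_apply, Fin.ext_iff, Fin.lt_def, Fin.val_zero, Fin.val_one]
  split_ifs <;> omega

lemma single_sub_prefixVec_dotProduct_tripleVec {i J j : Fin (m + 2)} (hjJ : j < J) (hJi : J ≤ i)
    (hik : i < k₂) (hk₂₃ : k₂ < k₃) :
    (Pi.single i 1 - prefixVec J : Fin (m + 2) → ℤ) ⬝ᵥ tripleVec k₃ k₂ j = 1 := by
  rw [Fin.le_def] at hJi
  rw [Fin.lt_def] at hjJ hik hk₂₃
  rw [dotProduct_tripleVec]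
  simp only [single_sub_prefixVec_apply, Fin.ext_iff, Fin.lt_def]
  split_ifs <;> omega

end SpecialVectors

section Normalization

variable {m : ℕ} {σ : Fin (m + 2) → ℤ} {X : Fin (m + 2) → ℤ}

lemma IsChangemaker.apply_one_eq_one (hσ : IsChangemaker (m + 2) σ)
    (hX : ∀ w ∈ perp σ, Even (w ⬝ᵥ X)) (hσ₀ : σ 0 = 1) (hX₀ : X 0 = 1) (hX₁ : Odd (X 1)) :
    σ 1 = 1 := by
  have hpar := even_mul_sub_mul_of_forall_even hX 0 1
  rw [hσ₀, hX₀] at hpar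
  have hle := hσ.le_one_add_sum_Iio 1
  have hIio : Iio (1 : Fin (m + 2)) = {0} := by
    ext l
    simp only [mem_Iio, mem_singleton, Fin.lt_def, Fin.ext_iff, Fin.val_zero, Fin.val_one]
    omega
  rw [hIio, sum_singleton, hσ₀] at hle
  have hge : σ 0 ≤ σ 1 := hσ.1 (Fin.zero_le 1)
  obtain ⟨u, hu⟩ := hpar
  obtain ⟨u', hu'⟩ := hX₁
  omega

lemma apply_one_eq_apply_zero_of_norm_le_two (hX : ∀ w ∈ perp σ, w ⬝ᵥ w ≤ 2 → w ⬝ᵥ X = 0)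
    (hσ : σ 0 = σ 1) : X 1 = X 0 := by
  have h01 : (0 : Fin (m + 2)) ≠ 1 := by
    simp only [ne_eq, Fin.ext_iff, Fin.val_zero, Fin.val_one]; omega
  have h := hX (Pi.single 0 1 - Pi.single 1 1)
    (by rw [mem_perp_iff, sub_dotProduct, single_dotProduct, single_dotProduct, hσ, sub_self])
    (by simp [dotProduct_sub, h01, h01.symm])
  simp only [sub_dotProduct, single_dotProduct, one_mul] at h
  omega

lemma IsChangemaker.eq_fourVec (hσ : IsChangemaker (m + 2) σ) (hXσ : X ∈ perp σ)
    (hXeven : ∀ w ∈ perp σ, Even (w ⬝ᵥ X)) (hXnorm : ∀ w ∈ perp σ, w ⬝ᵥ w ≤ 2 → w ⬝ᵥ X = 0)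
    {k₂ k₃ : Fin (m + 2)} (hk₂ : 2 < (k₂ : ℕ)) (hk₂₃ : k₂ < k₃)
    (hX : X = fourVec k₂ k₃ ∨ X = Pi.single 0 1 - Pi.single 1 1 - Pi.single k₂ 1 + Pi.single k₃ 1) :
    X = fourVec k₂ k₃ ∧ σ 0 = 1 ∧ σ 1 = 1 ∧ σ k₃ = σ k₂ + 2 ∧ ∀ j, Even (σ j - X j) := by
  have hk' : (k₂ : ℕ) < k₃ := hk₂₃
  have h01 : (0 : Fin (m + 2)) ≠ 1 := by
    simp only [ne_eq, Fin.ext_iff, Fin.val_zero, Fin.val_one]; omega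
  have hk₂₀ : k₂ ≠ 0 := by simp only [ne_eq, Fin.ext_iff, Fin.val_zero]; omega
  have hk₂₁ : k₂ ≠ 1 := by simp only [ne_eq, Fin.ext_iff, Fin.val_one]; omega
  have hk₃₀ : k₃ ≠ 0 := by simp only [ne_eq, Fin.ext_iff, Fin.val_zero]; omega
  have hk₃₁ : k₃ ≠ 1 := by simp only [ne_eq, Fin.ext_iff, Fin.val_one]; omega
  have hX₀ : X 0 = 1 ∧ (X 1 = 1 ∨ X 1 = -1) := by
    rcases hX with h | h <;>
      simp [h, fourVec, h01, h01.symm, hk₂₀.symm, hk₂₁.symm, hk₃₀.symm, hk₃₁.symm]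
  have hσ₀ : σ 0 = 1 := hσ.apply_zero_eq_one hXeven (by rw [hX₀.1]; exact odd_one)
  have hσ₁ : σ 1 = 1 := hσ.apply_one_eq_one hXeven hσ₀ hX₀.1 <| by
    rcases hX₀.2 with h | h <;> rw [h] <;> decide
  have hX₁ : X 1 = 1 :=
    (apply_one_eq_apply_zero_of_norm_le_two hXnorm (hσ₀.trans hσ₁.symm)).trans hX₀.1
  have hX' : X = fourVec k₂ k₃ := hX.resolve_right fun h => by
    have := congrFun h 1
    simp [hk₂₁.symm, hk₃₁.symm, hX₁] at this
  refine ⟨hX', hσ₀, hσ₁, ?_, fun j => ?_⟩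
  · rw [mem_perp_iff, dotProduct_comm, hX', dotProduct_fourVec, hσ₀, hσ₁] at hXσ
    linarith
  · simpa [hσ₀, hX₀.1] using even_mul_sub_mul_of_forall_even hXeven 0 j

end Normalization

section InitialSegment

variable {n : ℕ} {a : ℕ → ℤ} {σ : Fin (n + 2) → ℤ} {φ : (Fin (n + 1) → ℤ) ≃ₗ[ℤ] perp σ}
  {k₂ k₃ : Fin (n + 2)}

/-- `v = e_i - (e_0 + ⋯ + e_{J-1})` has norm `J + 1` but pairs to `1` with the `J - 2` vectors
`e_{k₃} - e_{k₂} - e_j`, `2 ≤ j < J`. -/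
lemma apply_ne_sum_Iio (hC : CTypeParams n a)
    (hφ : ∀ v w, CForm n a v w = (φ v : Fin (n + 2) → ℤ) ⬝ᵥ (φ w : Fin (n + 2) → ℤ))
    (hk₂₃ : k₂ < k₃) (hX : (φ (Pi.single 0 1) : Fin (n + 2) → ℤ) = fourVec k₂ k₃)
    (hσ₃ : σ k₃ = σ k₂ + 2) {i J : Fin (n + 2)} (hJ : 3 ≤ (J : ℕ)) (hJi : J ≤ i) (hik : i < k₂)
    (hlt : ∀ l < J, σ l = if (l : ℕ) < 2 then 1 else 2) : σ i ≠ ∑ l ∈ Iio J, σ l := by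
  intro hi
  have hJi' : (J : ℕ) ≤ i := hJi
  have hik' : (i : ℕ) < k₂ := hik
  have hk' : (k₂ : ℕ) < k₃ := hk₂₃
  have hvσ : (Pi.single i 1 - prefixVec J : Fin (n + 2) → ℤ) ∈ perp σ := by
    rw [mem_perp_iff, sub_dotProduct, single_dotProduct, prefixVec_dotProduct, hi, one_mul,
      sub_self]
  have hk₃₂ : k₃ ≠ k₂ := (ne_of_lt hk₂₃).symm
  obtain ⟨f₂, hf₂⟩ : ∃ f₂ : Fin (n + 2), (f₂ : ℕ) = 2 := ⟨⟨2, by omega⟩, rfl⟩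
  have hIco : ∀ j ∈ Ico f₂ J, 2 ≤ (j : ℕ) ∧ j < J ∧ j ≠ k₂ ∧ j ≠ k₃ := fun j hj => by
    obtain ⟨h₂, hjJ⟩ := mem_Ico.mp hj
    rw [Fin.le_def] at h₂
    rw [Fin.lt_def] at hjJ
    exact ⟨by omega, Fin.lt_def.mpr hjJ, Fin.ne_of_val_ne (by omega), Fin.ne_of_val_ne (by omega)⟩
  have key := two_mul_card_add_three_le_dotProduct_self hC hφ hvσ
    (by rw [hX]; exact single_sub_prefixVec_dotProduct_fourVec (by omega) hJi hik hk₂₃)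
    (s := Ico f₂ J) (y := fun j => tripleVec k₃ k₂ j)
    (fun j hj => by
      obtain ⟨hj₂, hjJ, hjk₂, hjk₃⟩ := hIco j hj
      refine ⟨?_, tripleVec_dotProduct_self hk₃₂ hjk₃.symm hjk₂.symm, ?_,
        single_sub_prefixVec_dotProduct_tripleVec hjJ hJi hik hk₂₃⟩
      · rw [mem_perp_iff, tripleVec_dotProduct, hσ₃, hlt j hjJ, if_neg (by omega)]
        ring
      · rw [hX]
        exact tripleVec_dotProduct_fourVec (by omega) hk₂₃ hj₂ hjk₂ hjk₃)
    (fun j hj j' hj' hjj' => tripleVec_dotProduct_tripleVec hk₃₂ (hIco j hj).2.2.2.symm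
      (hIco j' hj').2.2.2.symm (hIco j hj).2.2.1.symm (hIco j' hj').2.2.1.symm hjj')
  rw [single_sub_prefixVec_dotProduct_self hJi, Fin.card_Ico, hf₂] at key
  omega

lemma apply_eq_two_of_forall_lt (hC : CTypeParams n a)
    (hφ : ∀ v w, CForm n a v w = (φ v : Fin (n + 2) → ℤ) ⬝ᵥ (φ w : Fin (n + 2) → ℤ))
    (hσ : IsChangemaker (n + 2) σ) (hk₂₃ : k₂ < k₃)
    (hX : (φ (Pi.single 0 1) : Fin (n + 2) → ℤ) = fourVec k₂ k₃)
    (hσ₃ : σ k₃ = σ k₂ + 2) {i : Fin (n + 2)} (hσi : Even (σ i)) (hi₂ : 2 ≤ (i : ℕ))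
    (hik : i < k₂) (hlt : ∀ l < i, σ l = if (l : ℕ) < 2 then 1 else 2) : σ i = 2 := by
  have hσ₁ : σ 1 = 1 := by
    rw [hlt 1 (Fin.lt_def.mpr (by rw [Fin.val_one]; omega)), if_pos (by rw [Fin.val_one]; omega)]
  have hσ₁i : σ 1 ≤ σ i := hσ.1 (Fin.le_def.mpr (by rw [Fin.val_one]; omega))
  have hbound := hσ.le_one_add_sum_Iio i
  rw [sum_Iio_eq_two_mul_sub_two hi₂ hlt] at hbound
  obtain ⟨t, ht⟩ := hσi
  by_contra hne
  obtain ⟨J, hJ⟩ : ∃ J : Fin (n + 2), (J : ℕ) = t.toNat + 1 := ⟨⟨t.toNat + 1, by omega⟩, rfl⟩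
  have hJi : J ≤ i := Fin.le_def.mpr (by omega)
  refine apply_ne_sum_Iio hC hφ hk₂₃ hX hσ₃ (by omega) hJi hik
    (fun l hl => hlt l (lt_of_lt_of_le hl hJi)) ?_
  rw [sum_Iio_eq_two_mul_sub_two (by omega) fun l hl => hlt l (lt_of_lt_of_le hl hJi), hJ]
  push_cast
  omega

lemma apply_eq_two (hC : CTypeParams n a)
    (hφ : ∀ v w, CForm n a v w = (φ v : Fin (n + 2) → ℤ) ⬝ᵥ (φ w : Fin (n + 2) → ℤ))
    (hσ : IsChangemaker (n + 2) σ) (hk₂₃ : k₂ < k₃)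
    (hX : (φ (Pi.single 0 1) : Fin (n + 2) → ℤ) = fourVec k₂ k₃)
    (hpar : ∀ j, Even (σ j - (φ (Pi.single 0 1) : Fin (n + 2) → ℤ) j))
    (hσ₀ : σ 0 = 1) (hσ₁ : σ 1 = 1) (hσ₃ : σ k₃ = σ k₂ + 2) :
    ∀ i : Fin (n + 2), 2 ≤ (i : ℕ) → (i : ℕ) < (k₂ : ℕ) → σ i = 2 := by
  have hk' : (k₂ : ℕ) < k₃ := hk₂₃
  intro i
  induction i using WellFoundedLT.induction with
  | _ i ih =>
    intro hi₂ hik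
    refine apply_eq_two_of_forall_lt hC hφ hσ hk₂₃ hX hσ₃ ?_ hi₂ hik fun l hl => ?_
    · simpa [hX, fourVec_apply_of_ne (by rintro rfl; simp at hi₂) (by rintro rfl; simp at hi₂)
        (Fin.ne_of_val_ne (by omega) : i ≠ k₂) (Fin.ne_of_val_ne (by omega) : i ≠ k₃)] using hpar i
    · split_ifs with hl₂
      · obtain h | h : (l : ℕ) = 0 ∨ (l : ℕ) = 1 := by omega
        · rwa [show l = 0 from Fin.ext h]
        · rwa [show l = 1 from Fin.ext (by simp [h])]
      · exact ih l hl (by omega) (lt_trans hl hik)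

/-- Otherwise `σ (k₂ + 1) = σ k₂ + 1`, and `e_{k₂+1} - e_{k₂} - e_0` of norm `3` pairs to `1`
with `e_{k₃} - e_{k₂} - e_2`. -/
lemma val_eq_val_add_one (hC : CTypeParams n a)
    (hφ : ∀ v w, CForm n a v w = (φ v : Fin (n + 2) → ℤ) ⬝ᵥ (φ w : Fin (n + 2) → ℤ))
    (hσ : IsChangemaker (n + 2) σ) (hk₂ : 2 < (k₂ : ℕ)) (hk₂₃ : k₂ < k₃)
    (hX : (φ (Pi.single 0 1) : Fin (n + 2) → ℤ) = fourVec k₂ k₃)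
    (hpar : ∀ j, Even (σ j - (φ (Pi.single 0 1) : Fin (n + 2) → ℤ) j))
    (hσ₀ : σ 0 = 1) (htwo : ∀ i : Fin (n + 2), 2 ≤ (i : ℕ) → (i : ℕ) < (k₂ : ℕ) → σ i = 2)
    (hσ₃ : σ k₃ = σ k₂ + 2) : (k₃ : ℕ) = k₂ + 1 := by
  have hk' : (k₂ : ℕ) < k₃ := hk₂₃
  by_contra hne
  obtain ⟨f, hf⟩ : ∃ f : Fin (n + 2), (f : ℕ) = k₂ + 1 := ⟨⟨k₂ + 1, by omega⟩, rfl⟩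
  obtain ⟨f₂, hf₂⟩ : ∃ f₂ : Fin (n + 2), (f₂ : ℕ) = 2 := ⟨⟨2, by omega⟩, rfl⟩
  have hfk₃ : f ≠ k₃ := by simp only [ne_eq, Fin.ext_iff]; omega
  have hf₀ : f ≠ 0 := by simp only [ne_eq, Fin.ext_iff, Fin.val_zero]; omega
  have hfk₂ : f ≠ k₂ := by simp only [ne_eq, Fin.ext_iff]; omega
  have hk₂₀ : k₂ ≠ 0 := by simp only [ne_eq, Fin.ext_iff, Fin.val_zero]; omega
  have hf₂k₂ : f₂ ≠ k₂ := by simp only [ne_eq, Fin.ext_iff]; omega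
  have hf₂k₃ : f₂ ≠ k₃ := by simp only [ne_eq, Fin.ext_iff]; omega
  have hk₃₂ : k₃ ≠ k₂ := (ne_of_lt hk₂₃).symm
  have hσf : σ f = σ k₂ + 1 := by
    obtain ⟨u, hu⟩ := hpar f
    obtain ⟨u', hu'⟩ := hpar k₂
    rw [hX, fourVec_apply_of_ne hf₀ (by simp only [ne_eq, Fin.ext_iff, Fin.val_one]; omega) hfk₂
      hfk₃] at hu
    rw [hX, fourVec_apply_left hk₂ hk₂₃] at hu'
    have h₁ : σ k₂ ≤ σ f := hσ.1 (Fin.le_def.mpr (by omega))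
    have h₂ : σ f ≤ σ k₃ := hσ.1 (Fin.le_def.mpr (by omega))
    omega
  have key := two_mul_card_add_three_le_dotProduct_self hC hφ (v := tripleVec f k₂ 0)
    (by rw [mem_perp_iff, tripleVec_dotProduct, hσf, hσ₀]; ring)
    (by rw [hX]; exact tripleVec_succ_dotProduct_fourVec hk₂ hk₂₃ hf hfk₃)
    (s := (univ : Finset Unit)) (y := fun _ => tripleVec k₃ k₂ f₂)
    (fun _ _ => ⟨by rw [mem_perp_iff, tripleVec_dotProduct, hσ₃, htwo f₂ hf₂.ge (by omega)]; ring,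
      tripleVec_dotProduct_self hk₃₂ hf₂k₃.symm hf₂k₂.symm,
      by rw [hX]; exact tripleVec_dotProduct_fourVec hk₂ hk₂₃ hf₂.ge hf₂k₂ hf₂k₃,
      tripleVec_succ_dotProduct_tripleVec hk₂ hk₂₃ hf hf₂ hfk₃⟩)
    (fun _ _ _ _ h => absurd rfl h)
  rw [tripleVec_dotProduct_self hfk₂ hf₀ hk₂₀] at key
  simp at key

end InitialSegment

theorem statement17_general
    (n : ℕ) (aa : ℕ → ℤ) (hC : CTypeParams n aa)
    (σ : Fin (n + 2) → ℤ) (hσ : IsChangemaker (n + 2) σ)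
    (φ : (Fin (n + 1) → ℤ) ≃ₗ[ℤ] perp σ)
    (hφ : ∀ v w : Fin (n + 1) → ℤ,
      CForm n aa v w = dotF (φ v : Fin (n + 2) → ℤ) (φ w : Fin (n + 2) → ℤ))
    (k₁ k₂ k₃ : Fin (n + 2)) (hk₂₃ : k₂ < k₃)
    (hx0 : (φ (Pi.single 0 1) : Fin (n + 2) → ℤ) =
        Pi.single 0 1 + Pi.single k₁ 1 + Pi.single k₂ 1 - Pi.single k₃ 1 ∨
      (φ (Pi.single 0 1) : Fin (n + 2) → ℤ) =
        Pi.single 0 1 - Pi.single k₁ 1 - Pi.single k₂ 1 + Pi.single k₃ 1)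
    (hk₁1 : (k₁ : ℕ) = 1) (hk₂2 : 2 < (k₂ : ℕ)) :
    (φ (Pi.single 0 1) : Fin (n + 2) → ℤ) =
        Pi.single 0 1 + Pi.single k₁ 1 + Pi.single k₂ 1 - Pi.single k₃ 1 ∧
    (k₃ : ℕ) = (k₂ : ℕ) + 1 ∧
    σ 0 = 1 ∧ σ 1 = 1 ∧
    (∀ i : Fin (n + 2), 2 ≤ (i : ℕ) → (i : ℕ) < (k₂ : ℕ) → σ i = 2) ∧
    σ k₃ = σ k₂ + 2 := by
  obtain rfl : k₁ = 1 := Fin.ext (by rw [hk₁1, Fin.val_one])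
  have hφ' : ∀ v w, CForm n aa v w = (φ v : Fin (n + 2) → ℤ) ⬝ᵥ (φ w : Fin (n + 2) → ℤ) := hφ
  obtain ⟨hX, hσ₀, hσ₁, hσ₃, hpar⟩ := hσ.eq_fourVec (φ (Pi.single 0 1)).2
    (fun _ hw => even_dotProduct_image_single_zero hφ' hw)
    (fun _ hw => dotProduct_image_single_zero_eq_zero hC hφ' hw) hk₂2 hk₂₃ hx0
  have htwo := apply_eq_two hC hφ' hσ hk₂₃ hX hpar hσ₀ hσ₁ hσ₃
  exact ⟨hX, val_eq_val_add_one hC hφ' hσ hk₂2 hk₂₃ hX hpar hσ₀ htwo hσ₃, hσ₀, hσ₁, htwo, hσ₃⟩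

/-- Proposition 5.1: if `k_1 = 1` and `k_2 > 2`, then
`x_0 = e_0 + e_1 + e_{k_2} - e_{k_3}`, `k_3 = k_2 + 1`, and the initial segment of `σ`
is `(1, 1, 2, …, 2, σ_{k_2}, σ_{k_2} + 2)` with `s = k_2 - 2 ≥ 1` twos. -/
theorem statement17
    (n : ℕ) (aa : ℕ → ℤ) (hC : CTypeParams n aa)
    (σ : Fin (n + 2) → ℤ) (hσ : IsChangemaker (n + 2) σ)
    (φ : (Fin (n + 1) → ℤ) ≃ₗ[ℤ] perp σ)
    (hφ : ∀ v w : Fin (n + 1) → ℤ,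
      CForm n aa v w = dotF (φ v : Fin (n + 2) → ℤ) (φ w : Fin (n + 2) → ℤ))
    (k₁ k₂ k₃ : Fin (n + 2)) (hk₁ : 0 < k₁) (hk₁₂ : k₁ < k₂) (hk₂₃ : k₂ < k₃)
    (hx0 : (φ (Pi.single 0 1) : Fin (n + 2) → ℤ) =
        Pi.single 0 1 + Pi.single k₁ 1 + Pi.single k₂ 1 - Pi.single k₃ 1 ∨
      (φ (Pi.single 0 1) : Fin (n + 2) → ℤ) =
        Pi.single 0 1 - Pi.single k₁ 1 - Pi.single k₂ 1 + Pi.single k₃ 1)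
    (hk₁1 : (k₁ : ℕ) = 1) (hk₂2 : 2 < (k₂ : ℕ)) :
    (φ (Pi.single 0 1) : Fin (n + 2) → ℤ) =
        Pi.single 0 1 + Pi.single k₁ 1 + Pi.single k₂ 1 - Pi.single k₃ 1 ∧
    (k₃ : ℕ) = (k₂ : ℕ) + 1 ∧
    σ 0 = 1 ∧ σ 1 = 1 ∧
    (∀ i : Fin (n + 2), 2 ≤ (i : ℕ) → (i : ℕ) < (k₂ : ℕ) → σ i = 2) ∧
    σ k₃ = σ k₂ + 2 :=
  statement17_general n aa hC σ hσ φ hφ k₁ k₂ k₃ hk₂₃ hx0 hk₁1 hk₂2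

end Prism
end
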